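/- arXiv:0807.1922 — 5 statements merged into one kernel-verified Lean document; each statement's English description precedes it below -/
import Mathlib

section
/- Let A be a 4×4 real antisymmetric matrix (Aᵀ = -A) whose complexification has repeating eigenvalues, i.e., the characteristic polynomial of A.map (algebraMap ℝ ℂ) has at most two distinct roots in ℂ. Then A is a scalar multiple of an orthogonal matrix: there exist a real number c and a 4×4 real matrix O with OᵀO = 1 such that A = c • O (equivalently, Aᵀ * A = (c^2) • 1). -/
/-!
The complexification `B` of `A` satisfies `Bᵀ = -B`, so the roots of its characteristic polynomial
are symmetric under `x ↦ -x`; as there are at most two of them, they lie in `{a, -a}`. By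
Cayley–Hamilton `B * B - a ^ 2 • 1` is nilpotent, and since a nilpotent matrix has trace zero,
`a ^ 2 = tr (A * A) / 4 =: t` is real. Then `A * A - t • 1` is a nilpotent real symmetric matrix,
hence zero, so `Aᵀ * A = -t • 1` and `A` is `√(-t)` times an orthogonal matrix.
-/

open Matrix Polynomial

theorem Matrix.IsHermitian.eq_zero_of_isNilpotent {n R : Type*} [Fintype n] [DecidableEq n]
    [Ring R] [PartialOrder R] [StarRing R] [StarOrderedRing R] [NoZeroDivisors R]
    {M : Matrix n n R} (hM : M.IsHermitian) (hnil : IsNilpotent M) : M = 0 := by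
  have halve (j : ℕ) (hj : M ^ 2 ^ (j + 1) = 0) : M ^ 2 ^ j = 0 := by
    rwa [← conjTranspose_mul_self_eq_zero, (hM.pow _).eq, ← pow_add, ← two_mul, ← pow_succ']
  have of_pow_two_pow (j : ℕ) (hj : M ^ 2 ^ j = 0) : M = 0 := by
    induction j with
    | zero => simpa using hj
    | succ j ih => exact ih (halve j hj)
  obtain ⟨k, hk⟩ := hnil
  exact of_pow_two_pow k (pow_eq_zero_of_le Nat.lt_two_pow_self.le hk)

theorem Matrix.isRoot_charpoly_neg_of_transpose_eq_neg {n R : Type*} [Fintype n] [DecidableEq n]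
    [CommRing R] {A : Matrix n n R} (hA : Aᵀ = -A) {x : R} (hx : A.charpoly.IsRoot x) :
    A.charpoly.IsRoot (-x) := by
  have hneg : scalar n (-x) - A = -(scalar n x - A)ᵀ := by
    have hx : (scalar n x)ᵀ = scalar n x := diagonal_transpose _
    rw [transpose_sub, hA, hx, map_neg]
    abel
  rw [IsRoot, eval_charpoly, hneg, det_neg, det_transpose, ← eval_charpoly, hx.eq_zero, mul_zero]

theorem Finset.exists_subset_pair_neg_of_card_le_two {G : Type*} [AddGroup G] [IsAddTorsionFree G]
    [DecidableEq G] {s : Finset G} (hneg : ∀ x ∈ s, -x ∈ s) (hcard : s.card ≤ 2) :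
    ∃ a, s ⊆ {a, -a} := by
  by_cases hzero : s ⊆ {0}
  · exact ⟨0, by simpa using hzero⟩
  obtain ⟨a, has, ha⟩ := not_subset.mp hzero
  have hpair : ({a, -a} : Finset G).card = 2 :=
    card_pair fun h => ha (mem_singleton.mpr (self_eq_neg.mp h))
  refine ⟨a, (eq_of_subset_of_card_le ?_ (hpair ▸ hcard)).symm.subset⟩
  exact insert_subset has (singleton_subset_iff.mpr (hneg a has))

theorem Matrix.isNilpotent_mul_self_sub_sq_smul_one {n K : Type*} [Fintype n] [DecidableEq n]
    [Field K] [DecidableEq K] [IsAlgClosed K] {B : Matrix n n K} {a : K}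
    (hroots : B.charpoly.roots.toFinset ⊆ {a, -a}) :
    IsNilpotent (B * B - a ^ 2 • 1) := by
  have hdvd : B.charpoly ∣ (X ^ 2 - C (a ^ 2)) ^ Fintype.card n := by
    conv_lhs => rw [(IsAlgClosed.splits B.charpoly).eq_prod_roots_of_monic B.charpoly_monic]
    rw [← B.charpoly_natDegree_eq_dim, ← IsAlgClosed.card_roots_eq_natDegree,
      ← Multiset.prod_replicate, ← Multiset.map_const']
    refine Multiset.prod_dvd_prod_of_dvd _ _ fun x hx => ?_
    have hx' := hroots (Multiset.mem_toFinset.mpr hx)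
    rw [Finset.mem_insert, Finset.mem_singleton] at hx'
    obtain rfl | rfl := hx'
    · exact Dvd.intro (X + C x) (by rw [map_pow]; ring)
    · exact Dvd.intro (X - C a) (by rw [map_pow, map_neg]; ring)
  refine ⟨Fintype.card n, ?_⟩
  simpa [sq, smul_smul, Algebra.algebraMap_eq_smul_one] using
    aeval_eq_zero_of_dvd_aeval_eq_zero hdvd B.aeval_self_charpoly

theorem Matrix.eq_trace_div_card_of_isNilpotent_sub_smul_one {n K : Type*} [Fintype n]
    [DecidableEq n] [Nonempty n] [Field K] [CharZero K] {M : Matrix n n K} {c : K}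
    (h : IsNilpotent (M - c • 1)) : c = M.trace / Fintype.card n := by
  have htr := (isNilpotent_trace_of_isNilpotent h).eq_zero
  rw [trace_sub, trace_smul, trace_one, smul_eq_mul, sub_eq_zero] at htr
  rw [htr]
  field_simp

theorem Matrix.exists_eq_smul_orthogonal_of_transpose_mul_self_eq_smul_one {n : Type*}
    [Fintype n] [DecidableEq n] {A : Matrix n n ℝ} {s : ℝ} (h : Aᵀ * A = s • 1) :
    ∃ (c : ℝ) (O : Matrix n n ℝ), Oᵀ * O = 1 ∧ A = c • O := by
  rcases eq_or_ne A 0 with rfl | hA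
  · exact ⟨0, 1, by simp, by simp⟩
  obtain ⟨i, j, -⟩ : ∃ i j, A i j ≠ 0 := by
    by_contra! h0
    exact hA (ext h0)
  have hs : 0 < s := by
    have hnn : 0 ≤ s := by
      simpa [h] using (posSemidef_conjTranspose_mul_self A).diag_nonneg (i := j)
    refine hnn.lt_of_ne ?_
    rintro rfl
    exact hA (conjTranspose_mul_self_eq_zero.mp (by simpa using h))
  have hc : √s ≠ 0 := (Real.sqrt_pos.mpr hs).ne'
  refine ⟨√s, (√s)⁻¹ • A, ?_, by rw [smul_smul, mul_inv_cancel₀ hc, one_smul]⟩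
  rw [transpose_smul, Matrix.smul_mul, Matrix.mul_smul, h, smul_smul, smul_smul, ← mul_inv, ← sq,
    Real.sq_sqrt hs.le, inv_mul_cancel₀ hs.ne', one_smul]

/-- If `A` is a `4×4` real antisymmetric matrix whose complexification has repeating
eigenvalues (its characteristic polynomial over `ℂ` has at most two distinct roots),
then `A` is a scalar multiple of an orthogonal matrix. -/
theorem antisymmetric_repeating_eigenvalues_is_multiple_of_orthogonal
    (A : Matrix (Fin 4) (Fin 4) ℝ)
    (hanti : Aᵀ = -A)
    (hrep : ((A.map (algebraMap ℝ ℂ)).charpoly.roots.toFinset).card ≤ 2) :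
    ∃ (c : ℝ) (O : Matrix (Fin 4) (Fin 4) ℝ), Oᵀ * O = 1 ∧ A = c • O := by
  set φ := (algebraMap ℝ ℂ).mapMatrix (m := Fin 4)
  have hB : (φ A)ᵀ = -φ A := by rw [← map_neg, ← hanti]; rfl
  have hneg : ∀ x ∈ (φ A).charpoly.roots.toFinset, -x ∈ (φ A).charpoly.roots.toFinset := by
    intro x hx
    rw [Multiset.mem_toFinset, mem_roots (φ A).charpoly_monic.ne_zero] at hx ⊢
    exact isRoot_charpoly_neg_of_transpose_eq_neg hB hx
  obtain ⟨a, ha⟩ := Finset.exists_subset_pair_neg_of_card_le_two hneg hrep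
  have hnilB : IsNilpotent (φ A * φ A - a ^ 2 • 1) := isNilpotent_mul_self_sub_sq_smul_one ha
  set t := (A * A).trace / 4
  have hat : a ^ 2 = t := by
    rw [eq_trace_div_card_of_isNilpotent_sub_smul_one hnilB, ← map_mul, RingHom.mapMatrix_apply,
      ← AddMonoidHom.map_trace]
    simp [t]
  have hφ : φ (A * A - t • 1) = φ A * φ A - a ^ 2 • 1 := by
    rw [map_sub, map_mul, hat]
    congr 1
    ext i j
    by_cases h : i = j <;> simp [φ, h]
  have hnilA : IsNilpotent (A * A - t • 1) := by
    rw [← IsNilpotent.map_iff (f := φ) (map_injective (algebraMap ℝ ℂ).injective), hφ]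
    exact hnilB
  have hsymm : (A * A - t • 1).IsHermitian := by simp [IsHermitian, hanti]
  have hA2 : A * A = t • 1 := sub_eq_zero.mp (hsymm.eq_zero_of_isNilpotent hnilA)
  exact exists_eq_smul_orthogonal_of_transpose_mul_self_eq_smul_one (s := -t)
    (by rw [hanti, neg_mul, hA2, neg_smul])
end

section
/- Let A be a 4×4 real matrix that is both orthogonal (AᵀA = 1) and antisymmetric (Aᵀ = -A). Then there exist real numbers a, b, c with a² + b² + c² = 1 such that either A = K₁(a,b,c) (a matrix of the first kind) or A = K₂(a,b,c) (a matrix of the second kind). -/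
open Matrix

/-- A matrix of the first kind. -/
def K₁ (a b c : ℝ) : Matrix (Fin 4) (Fin 4) ℝ :=
  !![0,  a,  b,  c;
     -a, 0,  c,  -b;
     -b, -c, 0,  a;
     -c, b,  -a, 0]

/-- A matrix of the second kind. -/
def K₂ (a b c : ℝ) : Matrix (Fin 4) (Fin 4) ℝ :=
  !![0,  a,  b,  c;
     -a, 0,  -c, b;
     -b, c,  0,  -a;
     -c, -b, a,  0]

/-! An antisymmetric `A` has zero diagonal, so it is determined by the entries
`a b c` of its first row and `d e f` at positions `(1,2)`, `(1,3)`, `(2,3)`, and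
`det A = p ^ 2` for the Pfaffian `p = a * f - b * e + c * d`. Orthogonality makes the columns unit vectors and `det A = ±1`, so
`p ^ 4 = 1` and `p = ±1`. As the six squares sum to `2`,
`(d - c) ^ 2 + (e + b) ^ 2 + (f - a) ^ 2 = 2 - 2 * p` and
`(d + c) ^ 2 + (e - b) ^ 2 + (f + a) ^ 2 = 2 + 2 * p`,
so `p = 1` forces `A = K₁ a b c` and `p = -1` forces `A = K₂ a b c`. -/

def skew4 {R : Type*} [Ring R] (a b c d e f : R) : Matrix (Fin 4) (Fin 4) R :=
  !![0,  a,  b,  c;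
     -a, 0,  d,  e;
     -b, -d, 0,  f;
     -c, -e, -f, 0]

lemma eq_skew4_of_transpose_eq_neg {R : Type*} [Ring R] [NoZeroDivisors R] [CharZero R]
    {A : Matrix (Fin 4) (Fin 4) R} (hA : Aᵀ = -A) :
    A = skew4 (A 0 1) (A 0 2) (A 0 3) (A 1 2) (A 1 3) (A 2 3) := by
  have hskew : ∀ i j, A j i = -A i j := fun i j => congrFun (congrFun hA i) j
  have hdiag : ∀ i, A i i = 0 := fun i => self_eq_neg.mp (hskew i i)
  ext i j
  fin_cases i <;> fin_cases j <;>
    simp [skew4, hdiag, hskew 0 1, hskew 0 2, hskew 0 3, hskew 1 2, hskew 1 3, hskew 2 3]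

lemma det_skew4 {R : Type*} [CommRing R] (a b c d e f : R) :
    (skew4 a b c d e f).det = (a * f - b * e + c * d) ^ 2 := by
  simp [skew4, det_succ_row_zero, Fin.sum_univ_succ, Fin.succAbove]
  ring

lemma sum_sq_cols_of_transpose_mul_skew4_eq_one {R : Type*} [CommRing R] {a b c d e f : R}
    (h : (skew4 a b c d e f)ᵀ * skew4 a b c d e f = 1) :
    a ^ 2 + b ^ 2 + c ^ 2 = 1 ∧ a ^ 2 + d ^ 2 + e ^ 2 = 1 ∧
      b ^ 2 + d ^ 2 + f ^ 2 = 1 ∧ c ^ 2 + e ^ 2 + f ^ 2 = 1 := by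
  have hdiag : ∀ i, ((skew4 a b c d e f)ᵀ * skew4 a b c d e f) i i = 1 := by
    simp [h]
  have h0 := hdiag 0
  have h1 := hdiag 1
  have h2 := hdiag 2
  have h3 := hdiag 3
  simp only [skew4, Fin.isValue, mul_apply, transpose_apply, of_apply, cons_val', cons_val_zero,
    cons_val_fin_one, Fin.sum_univ_four, mul_zero, cons_val_one, mul_neg, neg_mul, neg_neg, zero_add,
    cons_val, add_zero] at h0 h1 h2 h3
  exact ⟨by linear_combination h0, by linear_combination h1, by linear_combination h2,
    by linear_combination h3⟩

lemma eq_zero_of_sq_add_sq_add_sq_eq_zero {x y z : ℝ} (h : x ^ 2 + y ^ 2 + z ^ 2 = 0) :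
    x = 0 ∧ y = 0 ∧ z = 0 := by
  refine ⟨?_, ?_, ?_⟩ <;> nlinarith [sq_nonneg x, sq_nonneg y, sq_nonneg z]

lemma skew4_eq_K₁_of_pfaffian_eq_one {a b c d e f : ℝ}
    (hcols : a ^ 2 + b ^ 2 + c ^ 2 = 1 ∧ a ^ 2 + d ^ 2 + e ^ 2 = 1 ∧
      b ^ 2 + d ^ 2 + f ^ 2 = 1 ∧ c ^ 2 + e ^ 2 + f ^ 2 = 1)
    (hpf : a * f - b * e + c * d = 1) :
    skew4 a b c d e f = K₁ a b c := by
  obtain ⟨h0, h1, h2, h3⟩ := hcols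
  obtain ⟨hd, he, hf⟩ : d - c = 0 ∧ e + b = 0 ∧ f - a = 0 :=
    eq_zero_of_sq_add_sq_add_sq_eq_zero (by linear_combination (h0 + h1 + h2 + h3) / 2 - 2 * hpf)
  obtain rfl : d = c := by linear_combination hd
  obtain rfl : e = -b := by linear_combination he
  obtain rfl : f = a := by linear_combination hf
  ext i j
  fin_cases i <;> fin_cases j <;> simp [skew4, K₁]

lemma skew4_eq_K₂_of_pfaffian_eq_neg_one {a b c d e f : ℝ}
    (hcols : a ^ 2 + b ^ 2 + c ^ 2 = 1 ∧ a ^ 2 + d ^ 2 + e ^ 2 = 1 ∧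
      b ^ 2 + d ^ 2 + f ^ 2 = 1 ∧ c ^ 2 + e ^ 2 + f ^ 2 = 1)
    (hpf : a * f - b * e + c * d = -1) :
    skew4 a b c d e f = K₂ a b c := by
  obtain ⟨h0, h1, h2, h3⟩ := hcols
  obtain ⟨hd, he, hf⟩ : d + c = 0 ∧ e - b = 0 ∧ f + a = 0 :=
    eq_zero_of_sq_add_sq_add_sq_eq_zero (by linear_combination (h0 + h1 + h2 + h3) / 2 + 2 * hpf)
  obtain rfl : d = -c := by linear_combination hd
  obtain rfl : e = b := by linear_combination he
  obtain rfl : f = -a := by linear_combination hf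
  ext i j
  fin_cases i <;> fin_cases j <;> simp [skew4, K₂]

/-- Every orthogonal antisymmetric `4×4` real matrix is of the first or the second kind,
with unit parameter vector. -/
theorem orthogonal_antisymmetric_two_kinds
    (A : Matrix (Fin 4) (Fin 4) ℝ)
    (horth : Aᵀ * A = 1)
    (hanti : Aᵀ = -A) :
    ∃ a b c : ℝ, a ^ 2 + b ^ 2 + c ^ 2 = 1 ∧ (A = K₁ a b c ∨ A = K₂ a b c) := by
  rw [eq_skew4_of_transpose_eq_neg hanti] at horth ⊢
  set a := A 0 1
  set b := A 0 2
  set c := A 0 3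
  set d := A 1 2
  set e := A 1 3
  set f := A 2 3
  have hcols := sum_sq_cols_of_transpose_mul_skew4_eq_one horth
  have hpf : (a * f - b * e + c * d) ^ 4 = 1 := by
    have hdet := congrArg det horth
    rw [det_mul, det_transpose, det_skew4, det_one] at hdet
    linear_combination hdet
  refine ⟨a, b, c, hcols.1, ?_⟩
  rcases (pow_eq_one_iff_cases.mp hpf).resolve_left (by norm_num) with h | ⟨h, -⟩
  · exact .inl (skew4_eq_K₁_of_pfaffian_eq_one hcols h)
  · exact .inr (skew4_eq_K₂_of_pfaffian_eq_neg_one hcols h)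
end

section
/- Let J := K₁(1,0,0), let B = K₂(a,b,c) be a matrix of the second kind with a² + b² + c² = 1, and let λ, μ be nonzero real numbers. Then λ • J + μ • B is not a scalar multiple of an orthogonal matrix: there do not exist a real number t and a 4×4 real matrix O with OᵀO = 1 such that λ • J + μ • B = t • O. -/
/-!
If `M = λ J + μ B` were `t O` with `O` orthogonal, then, `M` being skew-symmetric,
`M² = -MᵀM = -t²`. Since `J` and `B` commute and square to `-1`, this says that
`2λμ JB = (λ² + μ² - t²) 1` is a scalar matrix. But `JB` has trace zero, so `JB = 0`,
contradicting `(JB)² = J²B² = 1`.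
-/

open Matrix

/-- The particular matrix `J₀` of the first kind. -/
def J₀ : Matrix (Fin 4) (Fin 4) ℝ := K₁ 1 0 0

section SkewCommuting

variable {n R : Type*} [Fintype n] [DecidableEq n]

theorem mul_self_eq_neg_sq_smul_one_of_transpose_eq_neg [CommRing R] {M O : Matrix n n R}
    {t : R}
    (hskew : Mᵀ = -M) (hO : Oᵀ * O = 1) (hM : M = t • O) : M * M = -(t ^ 2) • 1 := by
  have : Mᵀ * M = (t ^ 2) • 1 := by
    rw [hM, transpose_smul, smul_mul_smul_comm, hO, sq]
  rw [hskew, neg_mul] at this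
  rw [neg_smul, ← this, neg_neg]

theorem not_exists_orthogonal_smul_eq_smul_add_smul [Field R] [CharZero R] [Nonempty n]
    {X Y : Matrix n n R}
    (hX : Xᵀ = -X) (hY : Yᵀ = -Y) (hXX : X * X = -1) (hYY : Y * Y = -1)
    (hXY : X * Y = Y * X) (htrace : trace (X * Y) = 0) {lam mu : R}
    (hlam : lam ≠ 0) (hmu : mu ≠ 0) :
    ¬ ∃ (t : R) (O : Matrix n n R), Oᵀ * O = 1 ∧ lam • X + mu • Y = t • O := by
  rintro ⟨t, O, hO, hM⟩
  have hskew : (lam • X + mu • Y)ᵀ = -(lam • X + mu • Y) := by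
    rw [transpose_add, transpose_smul, transpose_smul, hX, hY, smul_neg, smul_neg, neg_add]
  have hsq := mul_self_eq_neg_sq_smul_one_of_transpose_eq_neg hskew hO hM
  have hscalar :
      (2 * lam * mu) • (X * Y) = (lam ^ 2 + mu ^ 2 - t ^ 2) • (1 : Matrix n n R) := by
    have hexpand : (lam • X + mu • Y) * (lam • X + mu • Y)
        = (2 * lam * mu) • (X * Y) - (lam ^ 2 + mu ^ 2) • 1 := by
      simp only [add_mul, mul_add, smul_mul_smul_comm, hXX, hYY, ← hXY]
      module
    linear_combination (norm := module) hsq - hexpand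
  have hcoeff : lam ^ 2 + mu ^ 2 - t ^ 2 = 0 := by
    have := congrArg trace hscalar
    rw [trace_smul, trace_smul, htrace, trace_one, smul_zero, smul_eq_mul] at this
    exact (mul_eq_zero.mp this.symm).resolve_right (Nat.cast_ne_zero.mpr Fintype.card_ne_zero)
  have hXY0 : X * Y = 0 := by
    rw [hcoeff, zero_smul] at hscalar
    exact (smul_eq_zero.mp hscalar).resolve_left (by simp [hlam, hmu])
  have hXY1 : X * Y * (X * Y) = 1 := by
    rw [mul_assoc, ← mul_assoc Y, ← hXY, mul_assoc, hYY, ← mul_assoc, hXX, neg_mul_neg, one_mul]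
  rw [hXY0, zero_mul] at hXY1
  exact zero_ne_one hXY1

end SkewCommuting

theorem K₁_transpose (a b c : ℝ) : (K₁ a b c)ᵀ = -K₁ a b c := by
  ext i j; fin_cases i <;> fin_cases j <;> simp [K₁]

theorem K₂_transpose (a b c : ℝ) : (K₂ a b c)ᵀ = -K₂ a b c := by
  ext i j; fin_cases i <;> fin_cases j <;> simp [K₂]

theorem K₁_mul_self (a b c : ℝ) : K₁ a b c * K₁ a b c = -(a ^ 2 + b ^ 2 + c ^ 2) • 1 := by
  ext i j; fin_cases i <;> fin_cases j <;> simp [K₁, mul_apply, Fin.sum_univ_four] <;> ring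

theorem K₂_mul_self (a b c : ℝ) : K₂ a b c * K₂ a b c = -(a ^ 2 + b ^ 2 + c ^ 2) • 1 := by
  ext i j; fin_cases i <;> fin_cases j <;> simp [K₂, mul_apply, Fin.sum_univ_four] <;> ring

theorem K₁_mul_K₂_comm (a b c a' b' c' : ℝ) :
    K₁ a b c * K₂ a' b' c' = K₂ a' b' c' * K₁ a b c := by
  ext i j; fin_cases i <;> fin_cases j <;> simp [K₁, K₂, mul_apply, Fin.sum_univ_four] <;> ring

theorem trace_K₁_mul_K₂ (a b c a' b' c' : ℝ) : trace (K₁ a b c * K₂ a' b' c') = 0 := by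
  simp [K₁, K₂, trace, Fin.sum_univ_four]
  ring

/-- A nontrivial linear combination of `J₀` and a matrix of the second kind is never
a scalar multiple of an orthogonal matrix. -/
theorem linear_combination_J_second_kind_not_multiple_orthogonal
    (a b c lam mu : ℝ)
    (hunit : a ^ 2 + b ^ 2 + c ^ 2 = 1)
    (hlam : lam ≠ 0) (hmu : mu ≠ 0) :
    ¬ ∃ (t : ℝ) (O : Matrix (Fin 4) (Fin 4) ℝ),
        Oᵀ * O = 1 ∧ lam • J₀ + mu • K₂ a b c = t • O := by
  have hJJ : J₀ * J₀ = -1 := by simp [J₀, K₁_mul_self]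
  have hBB : K₂ a b c * K₂ a b c = -1 := by rw [K₂_mul_self, hunit, neg_smul, one_smul]
  exact not_exists_orthogonal_smul_eq_smul_add_smul (K₁_transpose 1 0 0) (K₂_transpose a b c)
    hJJ hBB (K₁_mul_K₂_comm 1 0 0 a b c) (trace_K₁_mul_K₂ 1 0 0 a b c) hlam hmu
end

section
/- Let J := K₁(1,0,0) and let C := K₁(a,b,c) be a matrix of the first kind with a² + b² + c² = 1 and a ≠ 1 and a ≠ -1. A 4×4 real matrix A satisfies AᵀA = 1, A*J = J*A and A*C = C*A if and only if there exist complex numbers z₁, z₂ with |z₁|² + |z₂|² = 1 such that A = ρ(!![z₁, z₂; -conj z₂, conj z₁]), i.e., A is the real form of an SU(2) matrix. -/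
open Matrix

/-- The real form of a `2×2` complex matrix: each entry `x + iy` is replaced by the
`2×2` real block `!![x, -y; y, x]`. -/
def ρ (M : Matrix (Fin 2) (Fin 2) ℂ) : Matrix (Fin 4) (Fin 4) ℝ :=
  Matrix.of fun i j =>
    let z : ℂ := M ⟨i.val / 2, by have := i.isLt; omega⟩ ⟨j.val / 2, by have := j.isLt; omega⟩
    if i.val % 2 = 0 then
      if j.val % 2 = 0 then z.re else -z.im
    else
      if j.val % 2 = 0 then z.im else z.re

/-!
Under `ρ`, ℝ⁴ becomes ℂ² and `J₀ = ρ (-i • 1)`, so the matrices commuting with `J₀` are exactly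
the real forms of complex `2×2` matrices. The part `K₁ 0 b c = K₁ a b c - a • J₀` is
conjugate-linear; when `b² + c² ≠ 0` (i.e. `a ≠ ±1`), commuting with it forces the quaternionic
shape `!![z₁, z₂; -conj z₂, conj z₁]`. Since `ρ` is an injective ring map sending `Mᴴ` to
`(ρ M)ᵀ`, orthogonality becomes `Mᴴ * M = 1`, which for that shape reads `|z₁|² + |z₂|² = 1`.
-/

open ComplexConjugate

theorem ρ_eq_entries (M : Matrix (Fin 2) (Fin 2) ℂ) :
    ρ M = !![(M 0 0).re, -(M 0 0).im, (M 0 1).re, -(M 0 1).im;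
             (M 0 0).im, (M 0 0).re, (M 0 1).im, (M 0 1).re;
             (M 1 0).re, -(M 1 0).im, (M 1 1).re, -(M 1 1).im;
             (M 1 0).im, (M 1 0).re, (M 1 1).im, (M 1 1).re] := by
  ext i j
  fin_cases i <;> fin_cases j <;> rfl

theorem ρ_mul (M N : Matrix (Fin 2) (Fin 2) ℂ) : ρ (M * N) = ρ M * ρ N := by
  rw [ρ_eq_entries, ρ_eq_entries, ρ_eq_entries]
  ext i j
  fin_cases i <;> fin_cases j <;> simp [Matrix.mul_apply, Fin.sum_univ_two, Fin.sum_univ_four] <;>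
    ring

theorem ρ_conjTranspose (M : Matrix (Fin 2) (Fin 2) ℂ) : ρ Mᴴ = (ρ M)ᵀ := by
  rw [ρ_eq_entries, ρ_eq_entries]
  ext i j
  fin_cases i <;> fin_cases j <;> simp

theorem ρ_one : ρ 1 = 1 := by
  rw [ρ_eq_entries]
  ext i j
  fin_cases i <;> fin_cases j <;> simp

theorem ρ_injective : Function.Injective ρ := by
  intro M N h
  ext i j
  rw [ρ_eq_entries, ρ_eq_entries] at h
  apply Complex.ext
  · fin_cases i <;> fin_cases j
    · exact congrFun₂ h 0 0
    · exact congrFun₂ h 0 2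
    · exact congrFun₂ h 2 0
    · exact congrFun₂ h 2 2
  · fin_cases i <;> fin_cases j
    · exact congrFun₂ h 1 0
    · exact congrFun₂ h 1 2
    · exact congrFun₂ h 3 0
    · exact congrFun₂ h 3 2

theorem Commute.ρ {M N : Matrix (Fin 2) (Fin 2) ℂ} (h : Commute M N) : Commute (ρ M) (ρ N) := by
  rw [Commute, SemiconjBy, ← ρ_mul, ← ρ_mul, h.eq]

theorem transpose_ρ_mul_ρ_eq_one_iff (M : Matrix (Fin 2) (Fin 2) ℂ) :
    (ρ M)ᵀ * ρ M = 1 ↔ Mᴴ * M = 1 := by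
  rw [← ρ_conjTranspose, ← ρ_mul, ← ρ_one, ρ_injective.eq_iff]

theorem J₀_eq_ρ : J₀ = ρ (-Complex.I • 1) := by
  rw [ρ_eq_entries]
  ext i j
  fin_cases i <;> fin_cases j <;> simp [J₀, K₁]

theorem commute_ρ_J₀ (M : Matrix (Fin 2) (Fin 2) ℂ) : Commute (ρ M) J₀ :=
  J₀_eq_ρ ▸ ((Commute.one_right M).smul_right _).ρ

theorem eq_ρ_of_commute_J₀ {A : Matrix (Fin 4) (Fin 4) ℝ} (h : Commute A J₀) :
    A = ρ !![⟨A 0 0, A 1 0⟩, ⟨A 0 2, A 1 2⟩; ⟨A 2 0, A 3 0⟩, ⟨A 2 2, A 3 2⟩] := by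
  have e := fun i j => congrFun₂ h.eq i j
  have e00 := e 0 0; have e01 := e 0 1; have e02 := e 0 2; have e03 := e 0 3
  have e20 := e 2 0; have e21 := e 2 1; have e22 := e 2 2; have e23 := e 2 3
  simp [J₀, K₁, Matrix.mul_apply, Fin.sum_univ_four] at e00 e01 e02 e03 e20 e21 e22 e23
  rw [ρ_eq_entries]
  ext i j
  fin_cases i <;> fin_cases j <;> simp <;> linarith

theorem K₁_eq_smul_J₀_add (a b c : ℝ) : K₁ a b c = a • J₀ + K₁ 0 b c := by
  ext i j
  fin_cases i <;> fin_cases j <;> simp [J₀, K₁]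

theorem commute_K₁_iff {A : Matrix (Fin 4) (Fin 4) ℝ} (hJ : Commute A J₀) (a b c : ℝ) :
    Commute A (K₁ a b c) ↔ Commute A (K₁ 0 b c) := by
  have hJa : Commute A (a • J₀) := hJ.smul_right a
  rw [K₁_eq_smul_J₀_add]
  exact ⟨fun h => by simpa using h.sub_right hJa, hJa.add_right⟩

theorem commute_ρ_K₁_zero_iff {b c : ℝ} (hbc : b ^ 2 + c ^ 2 ≠ 0)
    (M : Matrix (Fin 2) (Fin 2) ℂ) :
    Commute (ρ M) (K₁ 0 b c) ↔ M 1 0 = -conj (M 0 1) ∧ M 1 1 = conj (M 0 0) := by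
  constructor
  · intro h
    have e := fun i j => congrFun₂ h.eq i j
    have f00 := e 0 0; have f01 := e 0 1; have f02 := e 0 2; have f03 := e 0 3
    have f20 := e 2 0; have f22 := e 2 2; have f23 := e 2 3; have f30 := e 3 0
    simp [ρ_eq_entries, K₁, Matrix.mul_apply, Fin.sum_univ_four] at f00 f01 f02 f03 f20 f22 f23 f30
    have k10re : (b ^ 2 + c ^ 2) * ((M 1 0).re + (M 0 1).re) = 0 := by
      linear_combination (b / 2) * f22 - (b / 2) * f00 + (c / 2) * f23 - (c / 2) * f01
    have k10im : (b ^ 2 + c ^ 2) * ((M 0 1).im - (M 1 0).im) = 0 := by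
      linear_combination (c / 2) * f00 + (c / 2) * f22 - (b / 2) * f01 - (b / 2) * f23
    have k11re : (b ^ 2 + c ^ 2) * ((M 0 0).re - (M 1 1).re) = 0 := by
      linear_combination (b / 2) * f02 + (b / 2) * f20 + (c / 2) * f03 + (c / 2) * f30
    have k11im : (b ^ 2 + c ^ 2) * ((M 0 0).im + (M 1 1).im) = 0 := by
      linear_combination (b / 2) * f03 - (b / 2) * f30 + (c / 2) * f20 - (c / 2) * f02
    have cancel : ∀ x : ℝ, (b ^ 2 + c ^ 2) * x = 0 → x = 0 :=
      fun x hx => (mul_eq_zero.mp hx).resolve_left hbc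
    refine ⟨Complex.ext ?_ ?_, Complex.ext ?_ ?_⟩ <;>
      simp only [Complex.neg_re, Complex.neg_im, Complex.conj_re, Complex.conj_im] <;>
      linarith [cancel _ k10re, cancel _ k10im, cancel _ k11re, cancel _ k11im]
  · rintro ⟨h10, h11⟩
    rw [Commute, SemiconjBy, ρ_eq_entries, h10, h11]
    ext i j
    fin_cases i <;> fin_cases j <;> simp [K₁, Matrix.mul_apply, Fin.sum_univ_four] <;> ring

theorem conjTranspose_mul_self_eq_one_iff (z₁ z₂ : ℂ) :
    (!![z₁, z₂; -conj z₂, conj z₁])ᴴ * !![z₁, z₂; -conj z₂, conj z₁] = 1 ↔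
      ‖z₁‖ ^ 2 + ‖z₂‖ ^ 2 = 1 := by
  have h : (!![z₁, z₂; -conj z₂, conj z₁])ᴴ * !![z₁, z₂; -conj z₂, conj z₁] =
      ((‖z₁‖ ^ 2 + ‖z₂‖ ^ 2 : ℝ) : ℂ) • 1 := by
    ext i j
    fin_cases i <;> fin_cases j <;> simp [Matrix.mul_apply, Fin.sum_univ_two, Complex.conj_mul'] <;>
      ring
  rw [h]
  constructor
  · intro h1
    have h00 := congrFun₂ h1 0 0
    simp only [Matrix.smul_apply, Matrix.one_apply_eq, smul_eq_mul, mul_one] at h00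
    exact_mod_cast h00
  · intro h1
    rw [h1, Complex.ofReal_one, one_smul]

/-- An orthogonal `4×4` real matrix commutes with `J₀` and with a matrix `C = K₁ a b c`
of the first kind (with unit parameter vector, `C` not a multiple of `J₀`) if and only
if it is the real form of an `SU(2)` matrix. -/
theorem orthogonal_commuting_iff_SU2
    (a b c : ℝ) (hunit : a ^ 2 + b ^ 2 + c ^ 2 = 1) (ha : a ≠ 1) (ha' : a ≠ -1)
    (A : Matrix (Fin 4) (Fin 4) ℝ) :
    (Aᵀ * A = 1 ∧ A * J₀ = J₀ * A ∧ A * K₁ a b c = K₁ a b c * A) ↔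
    ∃ z₁ z₂ : ℂ, ‖z₁‖ ^ 2 + ‖z₂‖ ^ 2 = 1 ∧
      A = ρ !![z₁, z₂; -(starRingEnd ℂ) z₂, (starRingEnd ℂ) z₁] := by
  have hbc : b ^ 2 + c ^ 2 ≠ 0 := by
    have ha2 : a ^ 2 ≠ 1 := sq_ne_one_iff.mpr ⟨ha, ha'⟩
    contrapose! ha2
    linarith
  constructor
  · rintro ⟨horth, hJ, hK⟩
    obtain ⟨M, rfl⟩ : ∃ M, A = ρ M := ⟨_, eq_ρ_of_commute_J₀ hJ⟩
    obtain ⟨h10, h11⟩ :=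
      (commute_ρ_K₁_zero_iff hbc M).mp ((commute_K₁_iff (commute_ρ_J₀ M) a b c).mp hK)
    rw [M.eta_fin_two, h10, h11] at horth ⊢
    rw [transpose_ρ_mul_ρ_eq_one_iff, conjTranspose_mul_self_eq_one_iff] at horth
    exact ⟨M 0 0, M 0 1, horth, rfl⟩
  · rintro ⟨z₁, z₂, hnorm, rfl⟩
    have horth := (conjTranspose_mul_self_eq_one_iff z₁ z₂).mpr hnorm
    have hK := (commute_ρ_K₁_zero_iff hbc !![z₁, z₂; -conj z₂, conj z₁]).mpr ⟨rfl, rfl⟩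
    exact ⟨(transpose_ρ_mul_ρ_eq_one_iff _).mpr horth, commute_ρ_J₀ _,
      (commute_K₁_iff (commute_ρ_J₀ _) a b c).mpr hK⟩
end

section
/- Let J := K₁(1,0,0) and let C := K₁(a,b,c) be a matrix of the first kind with a² + b² + c² = 1 and a ≠ 1 and a ≠ -1. If A is a 4×4 real matrix with AᵀA = 1 that commutes with both J and C, then A commutes with every matrix of the first kind: A * K₁(a',b',c') = K₁(a',b',c') * A for all real numbers a', b', c'. -/
open Matrix

/-! `K₁ x y z = x • J₀ + y • K₁ 0 1 0 + z • K₁ 0 0 1`, and left multiplication by `J₀` rotates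
the plane spanned by `K₁ 0 1 0` and `K₁ 0 0 1` by a right angle. So if `A` commutes with `J₀` and
with `K₁ a b c`, it commutes with `K₁ 0 b c` and its rotation `J₀ * K₁ 0 b c = K₁ 0 c (-b)`.
These two span that plane as soon as `b² + c² = 1 - a² ≠ 0`, so `A` commutes with every
`K₁ x y z`. -/

lemma K₁_eq_smul_J₀_add_s9 (x y z : ℝ) : K₁ x y z = x • J₀ + K₁ 0 y z := by
  ext i j
  fin_cases i <;> fin_cases j <;> simp [K₁, J₀]

lemma J₀_mul_K₁_zero (y z : ℝ) : J₀ * K₁ 0 y z = K₁ 0 z (-y) := by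
  ext i j
  fin_cases i <;> fin_cases j <;> simp [K₁, J₀, Matrix.mul_apply, Fin.sum_univ_four]

lemma K₁_zero_eq_smul_add_smul {b c : ℝ} (hbc : b ^ 2 + c ^ 2 ≠ 0) (y z : ℝ) :
    K₁ 0 y z = ((y * b + z * c) / (b ^ 2 + c ^ 2)) • K₁ 0 b c
      + ((y * c - z * b) / (b ^ 2 + c ^ 2)) • K₁ 0 c (-b) := by
  ext i j
  fin_cases i <;> fin_cases j <;> simp [K₁] <;> field_simp <;> ring

lemma sq_add_sq_ne_zero_of_sq_add_sq_add_sq_eq_one {R : Type*} [CommRing R] [NoZeroDivisors R]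
    {a b c : R} (h : a ^ 2 + b ^ 2 + c ^ 2 = 1) (ha : a ≠ 1) (ha' : a ≠ -1) :
    b ^ 2 + c ^ 2 ≠ 0 := by
  have hbc : b ^ 2 + c ^ 2 = (1 - a) * (1 + a) := by linear_combination h
  rw [hbc]
  exact mul_ne_zero (sub_ne_zero.mpr ha.symm) fun h' => ha' (eq_neg_of_add_eq_zero_right h')

theorem orthogonal_commuting_J_C_commutes_with_all_first_kind_general
    (a b c : ℝ) (hunit : a ^ 2 + b ^ 2 + c ^ 2 = 1) (ha : a ≠ 1) (ha' : a ≠ -1)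
    (A : Matrix (Fin 4) (Fin 4) ℝ)
    (hJ : A * J₀ = J₀ * A)
    (hC : A * K₁ a b c = K₁ a b c * A) :
    ∀ a' b' c' : ℝ, A * K₁ a' b' c' = K₁ a' b' c' * A := by
  have hJ : Commute A J₀ := hJ
  have hbc : Commute A (K₁ 0 b c) := by
    have h := (show Commute A (K₁ a b c) from hC).sub_right (hJ.smul_right a)
    rwa [K₁_eq_smul_J₀_add_s9 a b c, add_sub_cancel_left] at h
  have hcb : Commute A (K₁ 0 c (-b)) := J₀_mul_K₁_zero b c ▸ hJ.mul_right hbc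
  have hplane : ∀ y z, Commute A (K₁ 0 y z) := fun y z => by
    rw [K₁_zero_eq_smul_add_smul (sq_add_sq_ne_zero_of_sq_add_sq_add_sq_eq_one hunit ha ha')]
    exact (hbc.smul_right _).add_right (hcb.smul_right _)
  intro a' b' c'
  rw [K₁_eq_smul_J₀_add_s9 a' b' c']
  exact ((hJ.smul_right a').add_right (hplane b' c')).eq

/-- An orthogonal matrix commuting with `J₀` and with a matrix of the first kind with
unit parameter vector and `a ≠ ±1` commutes with every matrix of the first kind. -/
theorem orthogonal_commuting_J_C_commutes_with_all_first_kind
    (a b c : ℝ) (hunit : a ^ 2 + b ^ 2 + c ^ 2 = 1) (ha : a ≠ 1) (ha' : a ≠ -1)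
    (A : Matrix (Fin 4) (Fin 4) ℝ)
    (horth : Aᵀ * A = 1)
    (hJ : A * J₀ = J₀ * A)
    (hC : A * K₁ a b c = K₁ a b c * A) :
    ∀ a' b' c' : ℝ, A * K₁ a' b' c' = K₁ a' b' c' * A :=
  orthogonal_commuting_J_C_commutes_with_all_first_kind_general a b c hunit ha ha' A hJ hC
end
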